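/- Let A be a multiring and S ⊆ A a multiplicative subset with 1 ∈ S. Define a ~ b iff as = bt for some s,t ∈ S, let A/ₘS be the set of equivalence classes with operations ā + b̄ = {c̄ : cv ∈ as + bt for some s,t,v ∈ S}, -ā = (-a)‾, ā·b̄ = (ab)‾. Then A/ₘS is a multiring and the canonical projection π : A → A/ₘS is a multiring morphism. -/

import Mathlib

/-- A multiring structure (multivalued addition) on a carrier `R`. -/
structure MulRingOps (R : Type*) where
  add : R → R → Set R
  mul : R → R → R
  neg : R → R
  zero : R
  one : R

namespace MulRingOps

variable {R : Type*}

/-- The multiring axioms. -/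
structure IsMulRing (S : MulRingOps R) : Prop where
  add_nonempty : ∀ a b, (S.add a b).Nonempty
  add_comm : ∀ a b, S.add a b = S.add b a
  rev_left : ∀ {x y z}, z ∈ S.add x y → x ∈ S.add z (S.neg y)
  rev_right : ∀ {x y z}, z ∈ S.add x y → y ∈ S.add (S.neg x) z
  zero_add : ∀ x y, y ∈ S.add S.zero x ↔ x = y
  add_assoc : ∀ x y z : R,
    (⋃ w ∈ S.add y z, S.add x w) = (⋃ t ∈ S.add x y, S.add t z)
  mul_comm : ∀ a b, S.mul a b = S.mul b a
  mul_assoc : ∀ a b c, S.mul (S.mul a b) c = S.mul a (S.mul b c)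
  one_mul : ∀ a, S.mul S.one a = a
  mul_zero : ∀ a, S.mul a S.zero = S.zero
  distrib : ∀ {a b c : R} (d : R), c ∈ S.add a b →
    S.mul c d ∈ S.add (S.mul a d) (S.mul b d)

/-- A hyperfield: a multiring with `0 ≠ 1` in which every nonzero element is invertible. -/
structure IsHyperfield (S : MulRingOps R) extends IsMulRing S : Prop where
  zero_ne_one : S.zero ≠ S.one
  exists_inv : ∀ a, a ≠ S.zero → ∃ b, S.mul a b = S.one

/-- A hyperfield is hyperbolic when `1 - 1` is everything. -/
def IsHyperbolic (S : MulRingOps R) : Prop :=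
  S.add S.one (S.neg S.one) = Set.univ

/-- Morphisms of multirings. -/
def IsHom {A B : Type*} (S : MulRingOps A) (T : MulRingOps B) (f : A → B) : Prop :=
  (∀ {a b c}, c ∈ S.add a b → f c ∈ T.add (f a) (f b)) ∧
  (∀ a, f (S.neg a) = T.neg (f a)) ∧
  f S.zero = T.zero ∧
  (∀ a b, f (S.mul a b) = T.mul (f a) (f b)) ∧
  f S.one = T.one

end MulRingOps

namespace MulRingOps

variable {A : Type*}

/-- The Marshall relation: `a ~ b` iff `as = bt` for some `s, t ∈ S`. -/
def mrel (S : MulRingOps A) (Sub : Set A) (a b : A) : Prop :=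
  ∃ s ∈ Sub, ∃ t ∈ Sub, S.mul a s = S.mul b t

/-- The carrier of the Marshall quotient `A/ₘS`. -/
abbrev MQuot (S : MulRingOps A) (Sub : Set A) := Quot (mrel S Sub)

/-- The multivalued sum on the Marshall quotient:
`ā + b̄ = {c̄ : cv ∈ as + bt for some s,t,v ∈ S}`. -/
def mAdd (S : MulRingOps A) (Sub : Set A) (x y : MQuot S Sub) : Set (MQuot S Sub) :=
  {z | ∃ a b c : A, x = Quot.mk _ a ∧ y = Quot.mk _ b ∧ z = Quot.mk _ c ∧
    ∃ s ∈ Sub, ∃ t ∈ Sub, ∃ v ∈ Sub, S.mul c v ∈ S.add (S.mul a s) (S.mul b t)}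

/-- `MSpec S Sub ops` says that `ops` is a multiring-operations structure on `A/ₘS`
implementing Marshall's quotient operations. -/
def MSpec (S : MulRingOps A) (Sub : Set A) (ops : MulRingOps (MQuot S Sub)) : Prop :=
  ops.add = mAdd S Sub ∧
  (∀ a b : A, ops.mul (Quot.mk _ a) (Quot.mk _ b) = Quot.mk _ (S.mul a b)) ∧
  (∀ a : A, ops.neg (Quot.mk _ a) = Quot.mk _ (S.neg a)) ∧
  ops.zero = Quot.mk _ S.zero ∧
  ops.one = Quot.mk _ S.one

end MulRingOps

/-!
Everything is checked on representatives. Whether `c̄ ∈ ā + b̄` holds does not depend on the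
representatives: multiplying `cv ∈ as + bt` by an element of `S` (distributivity) absorbs the
factors `s₀, t₀ ∈ S` with `a s₀ = a' t₀`. Each multiring axiom of `A/ₘS` is then the
corresponding axiom of `A`, applied after multiplying through by suitable elements of `S`.
-/

namespace MulRingOps

section Multiring

variable {R : Type*} {S : MulRingOps R}

protected theorem IsMulRing.mul_one (h : S.IsMulRing) (a : R) : S.mul a S.one = a :=
  (h.mul_comm a S.one).trans (h.one_mul a)

protected theorem IsMulRing.zero_mul (h : S.IsMulRing) (a : R) : S.mul S.zero a = S.zero :=
  (h.mul_comm S.zero a).trans (h.mul_zero a)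

protected theorem IsMulRing.mul_right_comm (h : S.IsMulRing) (a b c : R) :
    S.mul (S.mul a b) c = S.mul (S.mul a c) b := by
  rw [h.mul_assoc, h.mul_comm b c, ← h.mul_assoc]

protected theorem IsMulRing.neg_mul (h : S.IsMulRing) (a b : R) :
    S.neg (S.mul a b) = S.mul (S.neg a) b := by
  have hzero : S.zero ∈ S.add a (S.neg a) := h.rev_left ((h.zero_add a a).mpr rfl)
  have hzero_mul := h.distrib b hzero
  rw [h.zero_mul] at hzero_mul
  have hneg := h.rev_right hzero_mul
  rw [h.add_comm] at hneg
  exact (h.zero_add _ _).mp hneg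

theorem IsMulRing.exists_mem_add_of_mem_add {p q r w e : R} (h : S.IsMulRing)
    (hq : q ∈ S.add r w) (he : e ∈ S.add p q) : ∃ g ∈ S.add p r, e ∈ S.add g w := by
  have hmem : e ∈ ⋃ u ∈ S.add r w, S.add p u := Set.mem_biUnion hq he
  rw [h.add_assoc] at hmem
  simpa only [Set.mem_iUnion, exists_prop] using hmem

end Multiring

theorem biUnion_add_eq_of_subset {R : Type*} (add : R → R → Set R)
    (hcomm : ∀ a b, add a b = add b a)
    (hsub : ∀ x y z, (⋃ w ∈ add y z, add x w) ⊆ ⋃ t ∈ add x y, add t z) (x y z : R) :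
    (⋃ w ∈ add y z, add x w) = ⋃ t ∈ add x y, add t z := by
  refine (hsub x y z).antisymm fun u hu => ?_
  simp only [Set.mem_iUnion, exists_prop] at hu ⊢
  obtain ⟨t, ht, hut⟩ := hu
  rw [hcomm] at ht hut
  have := hsub z y x (Set.mem_biUnion ht hut)
  simp only [Set.mem_iUnion, exists_prop] at this
  obtain ⟨w, hw, huw⟩ := this
  exact ⟨w, by rwa [hcomm], by rwa [hcomm]⟩

variable {A : Type*} {S : MulRingOps A} {Sub : Set A}

structure IsMultiplicativeSubset (S : MulRingOps A) (Sub : Set A) : Prop where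
  one_mem : S.one ∈ Sub
  mul_mem : ∀ a ∈ Sub, ∀ b ∈ Sub, S.mul a b ∈ Sub

theorem mrel_refl (hSub : IsMultiplicativeSubset S Sub) (a : A) : mrel S Sub a a :=
  ⟨S.one, hSub.one_mem, S.one, hSub.one_mem, rfl⟩

theorem mrel_symm {a b : A} : mrel S Sub a b → mrel S Sub b a
  | ⟨s, hs, t, ht, hab⟩ => ⟨t, ht, s, hs, hab.symm⟩

theorem mrel_trans (h : S.IsMulRing) (hSub : IsMultiplicativeSubset S Sub) {a b c : A} :
    mrel S Sub a b → mrel S Sub b c → mrel S Sub a c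
  | ⟨s, hs, t, ht, hab⟩, ⟨s', hs', t', ht', hbc⟩ =>
    ⟨S.mul s s', hSub.mul_mem _ hs _ hs', S.mul t' t, hSub.mul_mem _ ht' _ ht, by
      rw [← h.mul_assoc, hab, h.mul_right_comm, hbc, h.mul_assoc]⟩

theorem mrel_equivalence (h : S.IsMulRing) (hSub : IsMultiplicativeSubset S Sub) :
    Equivalence (mrel S Sub) :=
  ⟨mrel_refl hSub, mrel_symm, mrel_trans h hSub⟩

theorem mrel_of_mk_eq (h : S.IsMulRing) (hSub : IsMultiplicativeSubset S Sub) {a b : A}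
    (hab : Quot.mk (mrel S Sub) a = Quot.mk (mrel S Sub) b) : mrel S Sub a b :=
  (mrel_equivalence h hSub).eqvGen_iff.mp (Quot.eqvGen_exact hab)

theorem mrel_mul_right (h : S.IsMulRing) {a a' : A} (b : A) :
    mrel S Sub a a' → mrel S Sub (S.mul a b) (S.mul a' b)
  | ⟨s, hs, t, ht, haa'⟩ => ⟨s, hs, t, ht, by rw [h.mul_right_comm, haa', h.mul_right_comm]⟩

theorem mrel_neg (h : S.IsMulRing) {a a' : A} :
    mrel S Sub a a' → mrel S Sub (S.neg a) (S.neg a')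
  | ⟨s, hs, t, ht, haa'⟩ => ⟨s, hs, t, ht, by rw [← h.neg_mul, ← h.neg_mul, haa']⟩

/-- `mAddRel S Sub a b c` says `c̄ ∈ ā + b̄`, read off the representatives `a, b, c`. -/
def mAddRel (S : MulRingOps A) (Sub : Set A) (a b c : A) : Prop :=
  ∃ s ∈ Sub, ∃ t ∈ Sub, ∃ v ∈ Sub, S.mul c v ∈ S.add (S.mul a s) (S.mul b t)

theorem mAddRel_comm (h : S.IsMulRing) {a b c : A} :
    mAddRel S Sub a b c → mAddRel S Sub b a c
  | ⟨s, hs, t, ht, v, hv, hc⟩ => ⟨t, ht, s, hs, v, hv, by rwa [h.add_comm]⟩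

theorem mAddRel_of_mem_add (h : S.IsMulRing) (hSub : IsMultiplicativeSubset S Sub)
    {a b c : A} (hc : c ∈ S.add a b) : mAddRel S Sub a b c :=
  ⟨S.one, hSub.one_mem, S.one, hSub.one_mem, S.one, hSub.one_mem, h.distrib S.one hc⟩

namespace mAddRel

theorem of_mrel_left (h : S.IsMulRing) (hSub : IsMultiplicativeSubset S Sub) {a a' b c : A} :
    mrel S Sub a a' → mAddRel S Sub a b c → mAddRel S Sub a' b c
  | ⟨s₀, hs₀, t₀, ht₀, haa'⟩, ⟨s, hs, t, ht, v, hv, hc⟩ => by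
    have hc' := h.distrib s₀ hc
    rw [h.mul_assoc, h.mul_assoc, h.mul_assoc, h.mul_comm s s₀, ← h.mul_assoc, haa',
      h.mul_assoc] at hc'
    exact ⟨_, hSub.mul_mem _ ht₀ _ hs, _, hSub.mul_mem _ ht _ hs₀, _, hSub.mul_mem _ hv _ hs₀,
      hc'⟩

theorem of_mrel_right (h : S.IsMulRing) (hSub : IsMultiplicativeSubset S Sub) {a b b' c : A}
    (hb : mrel S Sub b b') (habc : mAddRel S Sub a b c) : mAddRel S Sub a b' c :=
  mAddRel_comm h (of_mrel_left h hSub hb (mAddRel_comm h habc))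

theorem of_mrel_sum (h : S.IsMulRing) (hSub : IsMultiplicativeSubset S Sub) {a b c c' : A} :
    mrel S Sub c c' → mAddRel S Sub a b c → mAddRel S Sub a b c'
  | ⟨s₂, hs₂, t₂, ht₂, hcc'⟩, ⟨s, hs, t, ht, v, hv, hc⟩ => by
    have hc' := h.distrib s₂ hc
    rw [h.mul_right_comm c, hcc', h.mul_assoc, h.mul_assoc, h.mul_assoc] at hc'
    exact ⟨_, hSub.mul_mem _ hs _ hs₂, _, hSub.mul_mem _ ht _ hs₂, _, hSub.mul_mem _ ht₂ _ hv,
      hc'⟩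

theorem rev_left (h : S.IsMulRing) {a b c : A} :
    mAddRel S Sub a b c → mAddRel S Sub c (S.neg b) a
  | ⟨s, hs, t, ht, v, hv, hc⟩ => ⟨v, hv, t, ht, s, hs, h.neg_mul b t ▸ h.rev_left hc⟩

theorem rev_right (h : S.IsMulRing) {a b c : A} :
    mAddRel S Sub a b c → mAddRel S Sub (S.neg a) c b
  | ⟨s, hs, t, ht, v, hv, hc⟩ => ⟨s, hs, v, hv, t, ht, h.neg_mul a s ▸ h.rev_right hc⟩

theorem zero_left_iff (h : S.IsMulRing) (hSub : IsMultiplicativeSubset S Sub) {a b : A} :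
    mAddRel S Sub S.zero a b ↔ mrel S Sub a b := by
  refine ⟨fun ⟨s, hs, t, ht, v, hv, hb⟩ => ?_, fun ⟨s, hs, t, ht, hab⟩ => ?_⟩
  · rw [h.zero_mul, h.zero_add] at hb
    exact ⟨t, ht, v, hv, hb⟩
  · refine ⟨S.one, hSub.one_mem, s, hs, t, ht, ?_⟩
    rw [h.zero_mul, h.zero_add, hab]

theorem distrib (h : S.IsMulRing) {a b c : A} (d : A) :
    mAddRel S Sub a b c → mAddRel S Sub (S.mul a d) (S.mul b d) (S.mul c d)
  | ⟨s, hs, t, ht, v, hv, hc⟩ => by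
    have hcd := h.distrib d hc
    rw [h.mul_right_comm c, h.mul_right_comm a, h.mul_right_comm b] at hcd
    exact ⟨s, hs, t, ht, v, hv, hcd⟩

/-- Clearing the denominators `v` and `t'` of `d` reduces this to associativity in `A`. -/
theorem exists_assoc (h : S.IsMulRing) (hSub : IsMultiplicativeSubset S Sub) {a b c d e : A} :
    mAddRel S Sub b c d → mAddRel S Sub a d e →
      ∃ g, mAddRel S Sub a b g ∧ mAddRel S Sub g c e
  | ⟨s, hs, t, ht, v, hv, hd⟩, ⟨s', hs', t', ht', v', hv', he⟩ => by
    have hd' := h.distrib t' hd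
    have he' := h.distrib v he
    rw [h.mul_right_comm d] at he'
    obtain ⟨g, hg, heg⟩ := h.exists_mem_add_of_mem_add hd' he'
    simp only [h.mul_assoc] at hg heg
    refine ⟨g, ⟨_, hSub.mul_mem _ hs' _ hv, _, hSub.mul_mem _ hs _ ht', _, hSub.one_mem, ?_⟩,
      ⟨_, hSub.one_mem, _, hSub.mul_mem _ ht _ ht', _, hSub.mul_mem _ hv' _ hv, ?_⟩⟩
    · rwa [h.mul_one]
    · rwa [h.mul_one]

end mAddRel

theorem mk_mem_mAdd_iff (h : S.IsMulRing) (hSub : IsMultiplicativeSubset S Sub) {a b c : A} :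
    Quot.mk _ c ∈ mAdd S Sub (Quot.mk _ a) (Quot.mk _ b) ↔ mAddRel S Sub a b c := by
  refine ⟨fun ⟨a', b', c', ha, hb, hc, habc⟩ => ?_, fun habc => ⟨a, b, c, rfl, rfl, rfl, habc⟩⟩
  have ha' := mrel_symm (mrel_of_mk_eq h hSub ha)
  have hb' := mrel_symm (mrel_of_mk_eq h hSub hb)
  have hc' := mrel_symm (mrel_of_mk_eq h hSub hc)
  exact .of_mrel_sum h hSub hc' (.of_mrel_right h hSub hb' (.of_mrel_left h hSub ha' habc))

theorem mAdd_comm (h : S.IsMulRing) (x y : MQuot S Sub) : mAdd S Sub x y = mAdd S Sub y x := by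
  ext z
  constructor <;>
    exact fun ⟨a, b, c, ha, hb, hc, habc⟩ => ⟨b, a, c, hb, ha, hc, mAddRel_comm h habc⟩

def quotOps (h : S.IsMulRing) : MulRingOps (MQuot S Sub) where
  add := mAdd S Sub
  mul := Quot.map₂ S.mul
    (fun a _ _ hb => by rw [h.mul_comm a, h.mul_comm a]; exact mrel_mul_right h a hb)
    (fun _ _ b ha => mrel_mul_right h b ha)
  neg := Quot.map S.neg fun _ _ => mrel_neg h
  zero := Quot.mk _ S.zero
  one := Quot.mk _ S.one

theorem mSpec_quotOps (h : S.IsMulRing) : MSpec S Sub (quotOps h) :=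
  ⟨rfl, fun _ _ => rfl, fun _ => rfl, rfl, rfl⟩

theorem isMulRing_quotOps (h : S.IsMulRing) (hSub : IsMultiplicativeSubset S Sub) :
    (quotOps (Sub := Sub) h).IsMulRing where
  add_nonempty := by
    rintro ⟨a⟩ ⟨b⟩
    obtain ⟨c, hc⟩ := h.add_nonempty a b
    exact ⟨Quot.mk _ c, (mk_mem_mAdd_iff h hSub).mpr (mAddRel_of_mem_add h hSub hc)⟩
  add_comm := mAdd_comm h
  rev_left := by
    rintro ⟨a⟩ ⟨b⟩ ⟨c⟩ habc
    exact (mk_mem_mAdd_iff h hSub).mpr (mAddRel.rev_left h ((mk_mem_mAdd_iff h hSub).mp habc))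
  rev_right := by
    rintro ⟨a⟩ ⟨b⟩ ⟨c⟩ habc
    exact (mk_mem_mAdd_iff h hSub).mpr (mAddRel.rev_right h ((mk_mem_mAdd_iff h hSub).mp habc))
  zero_add := by
    rintro ⟨a⟩ ⟨b⟩
    exact (mk_mem_mAdd_iff h hSub).trans <| (mAddRel.zero_left_iff h hSub).trans
      ⟨Quot.sound, mrel_of_mk_eq h hSub⟩
  add_assoc := biUnion_add_eq_of_subset _ (mAdd_comm h) <| by
    rintro ⟨a⟩ ⟨b⟩ ⟨c⟩ ⟨e⟩ he
    simp only [Set.mem_iUnion, exists_prop] at he ⊢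
    obtain ⟨⟨d⟩, hd, hde⟩ := he
    obtain ⟨g, hg, hge⟩ := mAddRel.exists_assoc h hSub ((mk_mem_mAdd_iff h hSub).mp hd)
      ((mk_mem_mAdd_iff h hSub).mp hde)
    exact ⟨Quot.mk _ g, (mk_mem_mAdd_iff h hSub).mpr hg, (mk_mem_mAdd_iff h hSub).mpr hge⟩
  mul_comm := by
    rintro ⟨a⟩ ⟨b⟩
    exact congrArg (Quot.mk _) (h.mul_comm a b)
  mul_assoc := by
    rintro ⟨a⟩ ⟨b⟩ ⟨c⟩
    exact congrArg (Quot.mk _) (h.mul_assoc a b c)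
  one_mul := by
    rintro ⟨a⟩
    exact congrArg (Quot.mk _) (h.one_mul a)
  mul_zero := by
    rintro ⟨a⟩
    exact congrArg (Quot.mk _) (h.mul_zero a)
  distrib := by
    rintro ⟨a⟩ ⟨b⟩ ⟨c⟩ ⟨d⟩ habc
    exact (mk_mem_mAdd_iff h hSub).mpr (mAddRel.distrib h d ((mk_mem_mAdd_iff h hSub).mp habc))

theorem isHom_mk_quotOps (h : S.IsMulRing) (hSub : IsMultiplicativeSubset S Sub) :
    IsHom S (quotOps h) (Quot.mk (mrel S Sub)) :=
  ⟨fun hc => (mk_mem_mAdd_iff h hSub).mpr (mAddRel_of_mem_add h hSub hc),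
    fun _ => rfl, rfl, fun _ _ => rfl, rfl⟩

end MulRingOps

open MulRingOps in
/-- Marshall's quotient `A/ₘS` of a multiring `A` by a multiplicative subset
`S` with `1 ∈ S` is a multiring, and the canonical projection is a multiring morphism. -/
theorem marshall_quotient_isMulRing {A : Type*} (S : MulRingOps A) (h : S.IsMulRing)
    (Sub : Set A) (hone : S.one ∈ Sub)
    (hmul : ∀ a ∈ Sub, ∀ b ∈ Sub, S.mul a b ∈ Sub) :
    ∃ ops : MulRingOps (MQuot S Sub), MSpec S Sub ops ∧ ops.IsMulRing ∧
      IsHom S ops (Quot.mk _) :=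
  have hSub : IsMultiplicativeSubset S Sub := ⟨hone, hmul⟩
  ⟨quotOps h, mSpec_quotOps h, isMulRing_quotOps h hSub, isHom_mk_quotOps h hSub⟩
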